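/- Consider N clients with local objectives F_1, …, F_N : E → ℝ on a real finite-dimensional inner product space E, each differentiable and μ-strongly convex (μ > 0) with global minimizer v_k*, client weights p_1, …, p_N ≥ 0 with ∑_k p_k = 1, local iterates v¹, …, v^N ∈ E satisfying ‖∇F_k(v^k)‖ ≤ G for each k, the weighted average v̄ = ∑_k p_k v^k, and, for a nonempty subset S ⊆ {1,…,N}, the subset average z̄ = (1/|S|)∑_{k∈S} v^k. Let (Ω, 𝔽, P) be a probability space and W : Ω → E a square-integrable random vector with Bochner mean E[W] = z̄ and E[‖W − z̄‖²] ≤ J for some J ≥ 0. Then E[‖W − v̄‖²] ≤ J + 4 (∑_{k=1}^N (G/μ + ‖v_k*‖))². -/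

import Mathlib

/-!
Strong convexity makes the gradient strongly monotone, so each local iterate lies within
`‖∇F_k(v^k)‖ / μ ≤ G / μ` of the minimiser `v_k*`, where the gradient vanishes; hence
`‖v^k‖ ≤ G / μ + ‖v_k*‖`. Both `v̄` and `z̄` are combinations of the `v^k` with coefficients of
absolute value at most one, so `‖z̄ - v̄‖ ≤ 2 ∑_k (G / μ + ‖v_k*‖)`. The bias–variance
decomposition `E‖W - v̄‖² = E‖W - z̄‖² + ‖z̄ - v̄‖²` of the unbiased estimator `W` concludes.
-/

open MeasureTheory
open scoped RealInnerProductSpace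

theorem norm_sum_smul_le_sum {𝕜 F ι : Type*} [NormedField 𝕜] [SeminormedAddCommGroup F]
    [NormedSpace 𝕜 F] (s : Finset ι) {w : ι → 𝕜} {x : ι → F} {b : ι → ℝ}
    (hw : ∀ i ∈ s, ‖w i‖ ≤ 1) (hx : ∀ i ∈ s, ‖x i‖ ≤ b i) :
    ‖∑ i ∈ s, w i • x i‖ ≤ ∑ i ∈ s, b i := by
  refine (norm_sum_le _ _).trans (Finset.sum_le_sum fun i hi => ?_)
  calc ‖w i • x i‖ ≤ ‖w i‖ * ‖x i‖ := norm_smul_le _ _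
    _ ≤ 1 * b i := mul_le_mul (hw i hi) (hx i hi) (norm_nonneg _) zero_le_one
    _ = b i := one_mul _

section InnerProductSpace

variable {E : Type*} [NormedAddCommGroup E] [InnerProductSpace ℝ E]

theorem IsLocalMin.hasGradientAt_eq_zero [CompleteSpace E] {f : E → ℝ} {g x : E}
    (h : IsLocalMin f x) (hf : HasGradientAt f g x) : g = 0 := by
  simpa using h.hasFDerivAt_eq_zero hf.hasFDerivAt

section StronglyConvex

variable {f : E → ℝ} {f' : E → E} {μ : ℝ}
  (hsc : ∀ v z, f v + ⟪f' v, z - v⟫ + μ / 2 * ‖z - v‖ ^ 2 ≤ f z)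
include hsc

theorem mul_norm_sub_sq_le_inner_sub (x y : E) :
    μ * ‖x - y‖ ^ 2 ≤ ⟪f' x - f' y, x - y⟫ := by
  have hxy := hsc x y
  have hyx := hsc y x
  rw [norm_sub_rev y x, ← neg_sub x y, inner_neg_right] at hxy
  rw [inner_sub_left]
  linarith

theorem norm_sub_le_norm_gradient_div (hμ : 0 < μ) {x₀ : E} (h₀ : f' x₀ = 0) (x : E) :
    ‖x - x₀‖ ≤ ‖f' x‖ / μ := by
  have hmono := mul_norm_sub_sq_le_inner_sub hsc x x₀
  rw [h₀, sub_zero] at hmono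
  have hcs := real_inner_le_norm (f' x) (x - x₀)
  rw [le_div_iff₀ hμ]
  nlinarith [norm_nonneg (x - x₀), norm_nonneg (f' x)]

end StronglyConvex

theorem integral_norm_sub_sq_eq_add [CompleteSpace E] {Ω : Type*} [MeasurableSpace Ω]
    {P : Measure Ω} [IsProbabilityMeasure P] {W : Ω → E} (hW : MemLp W 2 P) (a : E) :
    ∫ ω, ‖W ω - a‖ ^ 2 ∂P = ∫ ω, ‖W ω - ∫ ω', W ω' ∂P‖ ^ 2 ∂P + ‖(∫ ω, W ω ∂P) - a‖ ^ 2 := by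
  set m := ∫ ω, W ω ∂P
  set c := m - a
  have hWm : MemLp (fun ω => W ω - m) 2 P := hW.sub (memLp_const m)
  have hWm_int : Integrable (fun ω => W ω - m) P := hWm.integrable one_le_two
  have hcross_int : Integrable (fun ω => 2 * ⟪W ω - m, c⟫) P :=
    ((innerSL ℝ c).integrable_comp hWm_int).const_mul 2 |>.congr
      (ae_of_all _ fun ω => by simp [real_inner_comm])
  have hcross : ∫ ω, ⟪W ω - m, c⟫ ∂P = 0 := by
    calc ∫ ω, ⟪W ω - m, c⟫ ∂P = ⟪∫ ω, (W ω - m) ∂P, c⟫ := by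
          simpa [real_inner_comm] using (innerSL ℝ c).integral_comp_comm hWm_int
      _ = 0 := by
          rw [integral_sub (hW.integrable one_le_two) (integrable_const m)]
          simp [m]
  have hpoint : ∀ ω, ‖W ω - a‖ ^ 2 = ‖W ω - m‖ ^ 2 + 2 * ⟪W ω - m, c⟫ + ‖c‖ ^ 2 := fun ω => by
    rw [show W ω - a = (W ω - m) + c by simp [c], norm_add_sq_real]
  simp_rw [hpoint]
  have hsq_int : Integrable (fun ω => ‖W ω - m‖ ^ 2) P := hWm.integrable_norm_pow two_ne_zero
  have hsum_int : Integrable (fun ω => ‖W ω - m‖ ^ 2 + 2 * ⟪W ω - m, c⟫) P :=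
    hsq_int.add hcross_int
  rw [integral_add hsum_int (integrable_const _),
    integral_add hsq_int hcross_int, integral_const_mul, hcross]
  simp

end InnerProductSpace

theorem filfl_aggregated_model_deviation_bound_general
    {E : Type*} [NormedAddCommGroup E] [InnerProductSpace ℝ E] [FiniteDimensional ℝ E]
    (N : ℕ) (μ : ℝ) (hμ : 0 < μ) (G : ℝ)
    (F : Fin N → E → ℝ) (F' : Fin N → E → E)
    (hdiff : ∀ k x, HasGradientAt (F k) (F' k x) x)
    (hsc : ∀ k, ∀ v z : E, F k v + ⟪F' k v, z - v⟫ + μ / 2 * ‖z - v‖ ^ 2 ≤ F k z)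
    (vstar : Fin N → E) (hmin : ∀ k x, F k (vstar k) ≤ F k x)
    (p : Fin N → ℝ) (hp : ∀ k, 0 ≤ p k) (hpsum : ∑ k, p k = 1)
    (v : Fin N → E) (hG : ∀ k, ‖F' k (v k)‖ ≤ G)
    (vbar : E) (hvbar : vbar = ∑ k, p k • v k)
    (S : Finset (Fin N)) (hS : S.Nonempty)
    (zbar : E) (hzbar : zbar = (S.card : ℝ)⁻¹ • ∑ k ∈ S, v k)
    {Ω : Type*} [MeasurableSpace Ω] (P : Measure Ω) [IsProbabilityMeasure P]
    (W : Ω → E) (hW : MemLp W 2 P)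
    (hmean : ∫ ω, W ω ∂P = zbar)
    (J : ℝ) (hvarJ : (∫ ω, ‖W ω - zbar‖ ^ 2 ∂P) ≤ J) :
    (∫ ω, ‖W ω - vbar‖ ^ 2 ∂P) ≤ J + 4 * (∑ k, (G / μ + ‖vstar k‖)) ^ 2 := by
  set C := ∑ k, (G / μ + ‖vstar k‖)
  have hv : ∀ k, ‖v k‖ ≤ G / μ + ‖vstar k‖ := fun k => by
    have hgrad := IsLocalMin.hasGradientAt_eq_zero (.of_forall (hmin k)) (hdiff k (vstar k))
    have hdist := norm_sub_le_norm_gradient_div (hsc k) hμ hgrad (v k)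
    have := norm_le_norm_add_norm_sub' (v k) (vstar k)
    have := div_le_div_of_nonneg_right (hG k) hμ.le
    linarith
  have hvbar_le : ‖vbar‖ ≤ C := hvbar ▸ norm_sum_smul_le_sum Finset.univ
    (fun k _ => by
      rw [Real.norm_of_nonneg (hp k), ← hpsum]
      exact Finset.single_le_sum (fun j _ => hp j) (Finset.mem_univ k))
    (fun k _ => hv k)
  have hzbar_le : ‖zbar‖ ≤ C := by
    rw [hzbar, Finset.smul_sum]
    refine (norm_sum_smul_le_sum S (fun _ _ => ?_) (fun k _ => hv k)).trans
      (Finset.sum_le_sum_of_subset_of_nonneg S.subset_univ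
        fun k _ _ => (norm_nonneg _).trans (hv k))
    rw [norm_inv, Real.norm_natCast]
    exact inv_le_one_of_one_le₀ (by exact_mod_cast hS.card_pos)
  have hbias : ‖zbar - vbar‖ ≤ 2 * C := by linarith [norm_sub_le zbar vbar]
  rw [integral_norm_sub_sq_eq_add hW vbar, hmean]
  nlinarith [norm_nonneg (zbar - vbar)]

/-- explicit bound `ξ = J + 4(∑ₖ (G/μ + ‖vₖ*‖))²` on `E‖W − v̄‖²`, where
`W` is an unbiased estimator of the filtered-subset average `z̄` with variance at most `J`
and `v̄` is the weighted average of the local iterates. -/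
theorem filfl_aggregated_model_deviation_bound
    {E : Type*} [NormedAddCommGroup E] [InnerProductSpace ℝ E] [FiniteDimensional ℝ E]
    (N : ℕ) (μ : ℝ) (hμ : 0 < μ) (G : ℝ)
    (F : Fin N → E → ℝ) (F' : Fin N → E → E)
    (hdiff : ∀ k x, HasGradientAt (F k) (F' k x) x)
    (hsc : ∀ k, ∀ v z : E, F k v + ⟪F' k v, z - v⟫ + μ / 2 * ‖z - v‖ ^ 2 ≤ F k z)
    (vstar : Fin N → E) (hmin : ∀ k x, F k (vstar k) ≤ F k x)
    (p : Fin N → ℝ) (hp : ∀ k, 0 ≤ p k) (hpsum : ∑ k, p k = 1)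
    (v : Fin N → E) (hG : ∀ k, ‖F' k (v k)‖ ≤ G)
    (vbar : E) (hvbar : vbar = ∑ k, p k • v k)
    (S : Finset (Fin N)) (hS : S.Nonempty)
    (zbar : E) (hzbar : zbar = (S.card : ℝ)⁻¹ • ∑ k ∈ S, v k)
    {Ω : Type*} [MeasurableSpace Ω] (P : Measure Ω) [IsProbabilityMeasure P]
    (W : Ω → E) (hW : MemLp W 2 P)
    (hmean : ∫ ω, W ω ∂P = zbar)
    (J : ℝ) (hJ : 0 ≤ J) (hvarJ : (∫ ω, ‖W ω - zbar‖ ^ 2 ∂P) ≤ J) :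
    (∫ ω, ‖W ω - vbar‖ ^ 2 ∂P) ≤ J + 4 * (∑ k, (G / μ + ‖vstar k‖)) ^ 2 :=
  filfl_aggregated_model_deviation_bound_general N μ hμ G F F' hdiff hsc vstar hmin p hp hpsum v hG
    vbar hvbar S hS zbar hzbar P W hW hmean J hvarJ
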